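/- arXiv:1508.01663 — 6 statements merged into one kernel-verified Lean document; each statement's English description precedes it below -/
import Mathlib

section
/- For integers x_0, ..., x_{d-1} ≥ 0, the d×d determinant det[1/(x_i + j)!]_{0 ≤ i,j ≤ d-1} equals (∏_{0 ≤ i < j ≤ d-1} (x_i - x_j)) / (∏_{0 ≤ i ≤ d-1} (x_i + d - 1)!), where by convention 1/m! = 0 for m < 0. -/
/-!
Factoring `(x_i + d - 1)!⁻¹` out of row `i` leaves in column `j` the rising factorial
`(x_i + j + 1)(x_i + j + 2)⋯(x_i + d - 1) = (x_i + d - 1)! / (x_i + j)!`, the value at `x_i` of a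
monic polynomial of degree `d - 1 - j`. A determinant of monic polynomials of degrees
`d - 1, …, 1, 0` evaluated at points `x_i` does not depend on the lower coefficients, so it is the
(reversed) Vandermonde determinant `∏_{i<j} (x_i - x_j)`.
-/

/-- `1/m!` for an integer `m`, with the convention `1/m! = 0` for `m < 0`. -/
noncomputable def invFact (m : ℤ) : ℚ := if 0 ≤ m then ((Nat.factorial m.toNat : ℕ) : ℚ)⁻¹ else 0

open Finset Polynomial Matrix
open scoped Nat

lemma invFact_natCast (n : ℕ) : invFact n = (n ! : ℚ)⁻¹ := by
  simp [invFact]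

lemma inv_factorial_eq_ascPochhammer_div (n m : ℕ) :
    (n ! : ℚ)⁻¹ = (ascPochhammer ℚ m).eval ((n : ℚ) + 1) / (n + m)! := by
  rw [← Nat.factorial_mul_ascFactorial, ← Nat.cast_add_one,
    ascPochhammer_nat_eq_natCast_ascFactorial, Nat.cast_mul]
  have : (n ! : ℚ) ≠ 0 := by positivity
  have : ((n + 1).ascFactorial m : ℚ) ≠ 0 := by positivity
  field_simp

lemma Finset.prod_filter_lt_eq_prod_prod_Ioi {ι M : Type*} [Fintype ι] [LinearOrder ι]
    [LocallyFiniteOrderTop ι] [CommMonoid M] (f : ι → ι → M) :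
    ∏ p ∈ univ.filter (fun p : ι × ι => p.1 < p.2), f p.1 p.2 = ∏ i, ∏ j ∈ Ioi i, f i j := by
  rw [prod_filter, Fintype.prod_prod_type]
  simp [← prod_filter, filter_lt_eq_Ioi]

theorem Matrix.det_eval_matrixOfPolynomials_eq_prod_sub {R : Type*} [CommRing R] {n : ℕ}
    (v : Fin n → R) (p : Fin n → R[X]) (h_deg : ∀ j, (p j).natDegree = n - 1 - j)
    (h_monic : ∀ j, (p j).Monic) :
    (of fun i j => (p j).eval (v i)).det =
      ∏ q ∈ univ.filter (fun q : Fin n × Fin n => q.1 < q.2), (v q.1 - v q.2) := by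
  have h_deg_rev (j : Fin n) : (p j.rev).natDegree = j := by
    rw [h_deg, Fin.val_rev]; omega
  have h_vdm := det_eval_matrixOfPolynomials_eq_det_vandermonde (fun i => v i.rev)
    (fun j => p j.rev) h_deg_rev fun j => h_monic j.rev
  rw [← det_submatrix_equiv_self Fin.revPerm]
  change (of fun i j : Fin n => (p j.rev).eval (v i.rev)).det = _
  rw [← h_vdm, det_vandermonde,
    ← prod_filter_lt_eq_prod_prod_Ioi fun i j : Fin n => v j.rev - v i.rev]
  -- the pair `(i, j)` with `i < j` corresponds to `(j.rev, i.rev)`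
  exact prod_equiv ((Equiv.prodComm _ _).trans (Fin.revPerm.prodCongr Fin.revPerm))
    (by simp) (by simp)

/-- **Lemma (Fulton, Example A.9.3).**  For nonnegative integers `x_0, …, x_{d-1}`,
`det[1/(x_i + j)!]_{0 ≤ i,j ≤ d-1} = ∏_{i<j}(x_i - x_j) / ∏_i (x_i + d - 1)!`. -/
theorem det_inv_factorial_eq_vandermonde_div (d : ℕ) (x : Fin d → ℕ) :
    Matrix.det (Matrix.of fun i j : Fin d => invFact ((x i : ℤ) + (j : ℕ))) =
      (∏ p ∈ Finset.univ.filter (fun p : Fin d × Fin d => p.1 < p.2),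
          ((x p.1 : ℚ) - (x p.2 : ℚ))) /
        ∏ i : Fin d, ((Nat.factorial (x i + d - 1) : ℕ) : ℚ) := by
  let q : Fin d → ℚ[X] := fun j => (ascPochhammer ℚ (d - 1 - j)).comp (X + C ((j : ℚ) + 1))
  have h_entry (i j : Fin d) :
      invFact ((x i : ℤ) + (j : ℕ)) = ((x i + d - 1)! : ℚ)⁻¹ * (q j).eval (x i : ℚ) := by
    have h_sum : x i + j + (d - 1 - j) = x i + d - 1 := by omega
    rw [← Nat.cast_add, invFact_natCast, inv_factorial_eq_ascPochhammer_div _ (d - 1 - j), h_sum]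
    simp [q, add_assoc, div_eq_inv_mul]
  have h_deg (j : Fin d) : (q j).natDegree = d - 1 - j := by
    rw [natDegree_comp, ascPochhammer_natDegree, natDegree_X_add_C, mul_one]
  have h_monic (j : Fin d) : (q j).Monic := (monic_ascPochhammer ℚ _).comp_X_add_C _
  calc _ = (∏ i, ((x i + d - 1)! : ℚ)⁻¹) * (of fun i j => (q j).eval (x i : ℚ)).det := by
        simp_rw [h_entry]
        exact det_mul_column _ _
    _ = _ := by
        rw [det_eval_matrixOfPolynomials_eq_prod_sub _ q h_deg h_monic, prod_inv_distrib,
          div_eq_inv_mul]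
end

section
/- Let Φ be the linear form on the Laurent polynomial ring A[t_0^{±1}, ..., t_{d-1}^{±1}] over a ℚ-algebra A defined by Φ(f) = const_t(Δ(t) · exp(∑_i 1/t_i) · f(t)), where const_t denotes the constant coefficient and Δ(t) = ∏_{i<j}(t_i - t_j). Then for any nonnegative integers k_0, ..., k_{d-1}, Φ(∏_i t_i^{k_i}) = (-1)^{d(d-1)/2} · (∏_{i<j}(k_i - k_j)) / (∏_i (k_i + d - 1)!). -/
open Finset

/-- The constant term of `Δ(t) · exp(∑_i 1/t_i) · ∏_i t_i^{m_i}`, where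
`Δ(t) = ∏_{i<j}(t_i - t_j) = ∑_σ sgn(σ) ∏_i t_i^{d-1-σ(i)}`:  expanding the exponential
series, the constant term equals `∑_σ sgn(σ) ∏_i 1/(m_i + d - 1 - σ(i))!`. -/
noncomputable def phiC (d : ℕ) (m : Fin d → ℤ) : ℚ :=
  ∑ σ : Equiv.Perm (Fin d),
    ((Equiv.Perm.sign σ : ℤ) : ℚ) * ∏ i : Fin d, invFact (m i + (d : ℤ) - 1 - ((σ i : ℕ) : ℤ))

/-- The linear form `Φ` on the Laurent polynomial ring `A[t_0^{±1}, …, t_{d-1}^{±1}]`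
(realized as `AddMonoidAlgebra A (Fin d → ℤ)`), given by
`Φ(f) = const_t(Δ(t) · exp(∑_i 1/t_i) · f(t))`; by linearity it is determined by its
values `phiC d m` on the monomials `t^m`. -/
noncomputable def Phi (A : Type*) [CommRing A] [Algebra ℚ A] (d : ℕ)
    (f : AddMonoidAlgebra A (Fin d → ℤ)) : A :=
  f.coeff.sum fun m a => phiC d m • a

/-- The action of a permutation `σ` on Laurent polynomials, with `σ(t_i) = t_{σ(i)}`. -/
noncomputable def permL {A : Type*} [CommRing A] {d : ℕ} (σ : Equiv.Perm (Fin d))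
    (f : AddMonoidAlgebra A (Fin d → ℤ)) : AddMonoidAlgebra A (Fin d → ℤ) :=
  AddMonoidAlgebra.ofCoeff (Finsupp.mapDomain (fun m : Fin d → ℤ => m ∘ σ.symm) f.coeff)

/-! Clearing the denominators `∏ᵢ (kᵢ + d - 1)!` turns each factor `1/(kᵢ + d - 1 - σ(i))!`
into the falling factorial `xᵢ(xᵢ - 1)⋯(xᵢ - σ(i) + 1)` with `xᵢ = kᵢ + d - 1`, a monic polynomial
of degree `σ(i)` in `xᵢ`. The alternating sum over `σ` is then the determinant of these monic
polynomials evaluated at the `xᵢ`, which equals the Vandermonde determinant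
`∏_{i<j} (xⱼ - xᵢ) = ∏_{i<j} (kⱼ - kᵢ)`; reversing its `d(d-1)/2` factors gives the sign. -/

open Matrix Polynomial in
theorem Matrix.det_of_descFactorial {R : Type*} [CommRing R] [IsDomain R] {d : ℕ} (x : Fin d → ℕ) :
    (Matrix.of fun i j : Fin d => ((x i).descFactorial j : R)).det
      = ∏ i : Fin d, ∏ j ∈ Ioi i, ((x j : R) - x i) := by
  simp_rw [← descPochhammer_eval_eq_descFactorial]
  rw [← det_eval_matrixOfPolynomials_eq_det_vandermonde _ _ (descPochhammer_natDegree R ·)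
    (monic_descPochhammer R ·), det_vandermonde]

lemma invFact_sub_mul_factorial (n j : ℕ) :
    invFact ((n : ℤ) - j) * (n.factorial : ℚ) = n.descFactorial j := by
  rcases le_or_gt j n with hj | hj
  · rw [← Nat.cast_sub hj, invFact, if_pos (Int.natCast_nonneg _), Int.toNat_natCast,
      ← Nat.factorial_mul_descFactorial hj, Nat.cast_mul, inv_mul_cancel_left₀ (by positivity)]
  · rw [invFact, if_neg (by omega), zero_mul, Nat.descFactorial_eq_zero_iff_lt.mpr hj,
      Nat.cast_zero]

lemma prod_filter_lt_sub {R : Type*} [CommRing R] {d : ℕ} (v : Fin d → R) :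
    ∏ p ∈ univ.filter (fun p : Fin d × Fin d => p.1 < p.2), (v p.1 - v p.2)
      = (-1) ^ (d * (d - 1) / 2) * ∏ i : Fin d, ∏ j ∈ Ioi i, (v j - v i) := by
  have hcard : #(univ.filter fun p : Fin d × Fin d => p.1 < p.2) = d * (d - 1) / 2 := by
    rw [Fintype.card_product_filter_lt, Fintype.card_fin, Nat.choose_two_right]
  have hpairs : ∏ p ∈ univ.filter (fun p : Fin d × Fin d => p.1 < p.2), (v p.2 - v p.1)
      = ∏ i : Fin d, ∏ j ∈ Ioi i, (v j - v i) := by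
    rw [prod_filter, Fintype.prod_prod_type]
    simp_rw [← prod_filter, filter_lt_eq_Ioi]
  rw [← hpairs, ← hcard, ← prod_const, ← prod_mul_distrib]
  exact prod_congr rfl fun _ _ => by ring

lemma phiC_natCast_mul_prod_factorial (d : ℕ) (k : Fin d → ℕ) :
    phiC d (fun i => (k i : ℤ)) * ∏ i : Fin d, ((k i + d - 1).factorial : ℚ)
      = ∏ i : Fin d, ∏ j ∈ Ioi i, ((k j : ℚ) - k i) := by
  have hx : ∀ i : Fin d, ((k i + d - 1 : ℕ) : ℤ) = k i + d - 1 := fun i => by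
    have := i.pos
    omega
  calc phiC d (fun i => (k i : ℤ)) * ∏ i : Fin d, ((k i + d - 1).factorial : ℚ)
      = ∑ σ : Equiv.Perm (Fin d),
          ((Equiv.Perm.sign σ : ℤ) : ℚ) * ∏ i, ((k i + d - 1).descFactorial (σ i) : ℚ) := by
        rw [phiC, sum_mul]
        refine sum_congr rfl fun σ _ => ?_
        rw [mul_assoc, ← prod_mul_distrib]
        refine congrArg _ (prod_congr rfl fun i _ => ?_)
        rw [← invFact_sub_mul_factorial, hx]
    _ = (Matrix.of fun i j : Fin d => ((k i + d - 1).descFactorial j : ℚ)).det := by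
        rw [← Matrix.det_transpose, Matrix.det_apply']
        rfl
    _ = ∏ i : Fin d, ∏ j ∈ Ioi i, ((k j : ℚ) - k i) := by
        rw [Matrix.det_of_descFactorial]
        refine prod_congr rfl fun i _ => prod_congr rfl fun j _ => ?_
        rw [← Int.cast_natCast, hx, ← Int.cast_natCast (k i + d - 1), hx]
        push_cast
        ring

theorem phiC_natCast (d : ℕ) (k : Fin d → ℕ) :
    phiC d (fun i => (k i : ℤ)) =
      (-1) ^ (d * (d - 1) / 2) *
        (∏ p ∈ univ.filter (fun p : Fin d × Fin d => p.1 < p.2), ((k p.1 : ℚ) - k p.2)) /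
        ∏ i : Fin d, ((k i + d - 1).factorial : ℚ) := by
  rw [eq_div_iff (by positivity), phiC_natCast_mul_prod_factorial,
    prod_filter_lt_sub (fun i => (k i : ℚ)), ← mul_assoc, ← mul_pow, neg_one_mul, neg_neg,
    one_pow, one_mul]

lemma Phi_single (A : Type*) [CommRing A] [Algebra ℚ A] (d : ℕ) (m : Fin d → ℤ) (a : A) :
    Phi A d (AddMonoidAlgebra.single m a) = phiC d m • a := by
  rw [Phi, AddMonoidAlgebra.coeff_single]
  exact Finsupp.sum_single_index (smul_zero _)

/-- **Evaluation formula.**  For nonnegative integers `k_0, …, k_{d-1}`,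
`Φ(∏_i t_i^{k_i}) = (-1)^{d(d-1)/2} · ∏_{i<j}(k_i - k_j) / ∏_i (k_i + d - 1)!`. -/
theorem Phi_monomial (A : Type*) [CommRing A] [Algebra ℚ A] (d : ℕ) (k : Fin d → ℕ) :
    Phi A d (AddMonoidAlgebra.single (fun i => (k i : ℤ)) 1) =
      algebraMap ℚ A ((-1) ^ (d * (d - 1) / 2) *
        (∏ p ∈ Finset.univ.filter (fun p : Fin d × Fin d => p.1 < p.2),
          ((k p.1 : ℚ) - (k p.2 : ℚ))) /
        ∏ i : Fin d, ((Nat.factorial (k i + d - 1) : ℕ) : ℚ)) := by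
  rw [Phi_single, phiC_natCast, Algebra.algebraMap_eq_smul_one]
end

section
/- With Φ as above, if f is a symmetric Laurent polynomial in t_0,...,t_{d-1}, then Φ(∏_{i=0}^{d-1} t_i^{-(d-1-i)} · f) = (-1)^{d(d-1)/2} · Φ(∏_{i=0}^{d-1} t_i^{-i} · f). -/
/-!
Reversing the variables, `t_i ↦ t_{d-1-i}`, maps the monomial `∏ t_i^{-i}` to
`∏ t_i^{-(d-1-i)}` and fixes the symmetric `f`. Since `Φ` pairs with the alternating
Vandermonde `Δ`, it changes by the sign of a permutation of the variables, and the reversal of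
`d` letters has sign `(-1)^{d(d-1)/2}`.
-/

open Finset

/-- The Laurent monomial `t^m = ∏_i t_i^{m_i}` with coefficient `a`. -/
noncomputable def monoL (A : Type*) [CommRing A] {d : ℕ} (m : Fin d → ℤ) (a : A) :
    AddMonoidAlgebra A (Fin d → ℤ) := AddMonoidAlgebra.single m a

namespace Fin

theorem revPerm_succ (n : ℕ) :
    (revPerm : Equiv.Perm (Fin (n + 1))) =
      finRotate (n + 1) * (revPerm : Equiv.Perm (Fin n)).viaFintypeEmbedding castSuccEmb := by
  ext i
  induction i using lastCases with
  | last =>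
    have h : last n ∉ Set.range castSuccEmb := by simp
    simp [Equiv.Perm.viaFintypeEmbedding_apply_notMem_range _ _ h]
  | cast i =>
    have h := Equiv.Perm.viaFintypeEmbedding_apply_image revPerm castSuccEmb i
    simp only [coe_castSuccEmb, revPerm_apply] at h
    simp [h, rev_castSucc, coeSucc_eq_succ]

theorem sign_revPerm (n : ℕ) :
    Equiv.Perm.sign (revPerm : Equiv.Perm (Fin n)) = (-1) ^ (n * (n - 1) / 2) := by
  rw [← Finset.sum_range_id]
  induction n with
  | zero => rfl
  | succ n ih =>
    rw [revPerm_succ, map_mul, sign_finRotate, Equiv.Perm.viaFintypeEmbedding_sign, ih,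
      ← pow_add, Finset.sum_range_succ, Nat.add_sub_cancel, add_comm]

end Fin

theorem phiC_comp_perm (d : ℕ) (m : Fin d → ℤ) (τ : Equiv.Perm (Fin d)) :
    phiC d (m ∘ τ) = (Equiv.Perm.sign τ : ℚ) * phiC d m := by
  unfold phiC
  rw [Finset.mul_sum]
  refine (Fintype.sum_equiv (Equiv.mulRight τ) _ _ fun σ => ?_).symm
  rw [Equiv.coe_mulRight, Equiv.Perm.sign_mul, Units.val_mul, Int.cast_mul,
    mul_comm _ (τ.sign : ℚ), mul_assoc, ← Equiv.prod_comp τ]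
  rfl

section LaurentPolynomial

variable {A : Type*} [CommRing A] {d : ℕ}

theorem permL_mul (τ : Equiv.Perm (Fin d)) (g h : AddMonoidAlgebra A (Fin d → ℤ)) :
    permL τ (g * h) = permL τ g * permL τ h :=
  AddMonoidAlgebra.mapDomain_mul (LinearMap.funLeft ℤ ℤ τ.symm) g h

theorem permL_monoL (τ : Equiv.Perm (Fin d)) (m : Fin d → ℤ) (a : A) :
    permL τ (monoL A m a) = monoL A (m ∘ τ.symm) a := by
  simp [permL, monoL, AddMonoidAlgebra.ofCoeff_single]

theorem Phi_permL [Algebra ℚ A] (τ : Equiv.Perm (Fin d))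
    (g : AddMonoidAlgebra A (Fin d → ℤ)) :
    Phi A d (permL τ g) = (Equiv.Perm.sign τ : ℤ) • Phi A d g := by
  rw [Phi, permL, AddMonoidAlgebra.coeff_ofCoeff,
    Finsupp.sum_mapDomain_index (fun _ => smul_zero _) (fun _ _ _ => smul_add ..),
    Phi, Finsupp.smul_sum]
  refine Finsupp.sum_congr fun m _ => ?_
  rw [phiC_comp_perm, Equiv.Perm.sign_symm, mul_smul, Int.cast_smul_eq_zsmul]

end LaurentPolynomial

/-- If `f` is a symmetric Laurent polynomial in `t_0, …, t_{d-1}`, then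
`Φ(∏_i t_i^{-(d-1-i)} · f) = (-1)^{d(d-1)/2} · Φ(∏_i t_i^{-i} · f)`. -/
theorem Phi_staircase_symm (A : Type*) [CommRing A] [Algebra ℚ A] (d : ℕ)
    (f : AddMonoidAlgebra A (Fin d → ℤ)) (hf : ∀ σ : Equiv.Perm (Fin d), permL σ f = f) :
    Phi A d (monoL A (fun i : Fin d => -((d : ℤ) - 1 - (i : ℕ))) 1 * f) =
      ((-1 : ℤ) ^ (d * (d - 1) / 2)) •
        Phi A d (monoL A (fun i : Fin d => -((i : ℕ) : ℤ)) 1 * f) := by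
  have hstair : (fun i : Fin d => -((d : ℤ) - 1 - (i : ℕ))) =
      (fun i : Fin d => -((i : ℕ) : ℤ)) ∘ Fin.revPerm.symm := by
    funext i
    simp only [Function.comp_apply, Fin.revPerm_symm, Fin.revPerm_apply, Fin.val_rev]
    omega
  calc _ = Phi A d (permL Fin.revPerm (monoL A (fun i : Fin d => -((i : ℕ) : ℤ)) 1 * f)) := by
        rw [permL_mul, permL_monoL, hf, hstair]
    _ = _ := by
        rw [Phi_permL, Fin.sign_revPerm]
        simp
end

section
/- The determinant det[1/(k_i + d - 1 - j)!]_{0 ≤ i,j ≤ d-1} equals (-1)^{d(d-1)/2} · (∏_{0≤i<j≤d-1}(k_i - k_j)) / ∏_i (k_i + d - 1)!, for any nonnegative integers k_0,...,k_{d-1}, with the convention 1/m! = 0 for m < 0. -/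
open Finset Polynomial
open scoped Nat

lemma invFact_natCast_sub (n j : ℕ) :
    invFact ((n : ℤ) - j) = (n.descFactorial j : ℚ) / n ! := by
  rcases le_or_gt j n with hjn | hnj
  · have hpos : (0 : ℤ) ≤ n - j := by omega
    have htoNat : ((n : ℤ) - j).toNat = n - j := by omega
    have hfact : ((n - j)! : ℚ) * n.descFactorial j = n ! := by
      exact_mod_cast Nat.factorial_mul_descFactorial hjn
    have hdesc : (n.descFactorial j : ℚ) ≠ 0 := by
      exact_mod_cast (Nat.descFactorial_pos.mpr hjn).ne'
    rw [invFact, if_pos hpos, htoNat, ← hfact, div_mul_cancel_right₀ hdesc]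
  · rw [invFact, if_neg (by omega), Nat.descFactorial_eq_zero_iff_lt.mpr hnj, Nat.cast_zero,
      zero_div]

namespace Fin

lemma prod_filter_fst_lt_snd {M : Type*} [CommMonoid M] (d : ℕ) (f : Fin d → Fin d → M) :
    ∏ p ∈ univ.filter (fun p : Fin d × Fin d => p.1 < p.2), f p.1 p.2 =
      ∏ i, ∏ j ∈ Ioi i, f i j :=
  prod_finset_product' _ _ _ (by simp)

lemma card_filter_fst_lt_snd (d : ℕ) :
    #(univ.filter (fun p : Fin d × Fin d => p.1 < p.2)) = d * (d - 1) / 2 := by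
  calc #(univ.filter (fun p : Fin d × Fin d => p.1 < p.2))
      = ∑ i : Fin d, (d - 1 - i) := by
        rw [card_eq_sum_ones, sum_finset_product' _ univ (fun i : Fin d => Ioi i) (by simp)
          (f := fun _ _ => 1)]
        simp only [← card_eq_sum_ones, Fin.card_Ioi]
    _ = ∑ i ∈ range d, (d - 1 - i) := Fin.sum_univ_eq_sum_range (fun i => d - 1 - i) d
    _ = ∑ i ∈ range d, i := sum_range_reflect id d
    _ = d * (d - 1) / 2 := sum_range_id d

end Fin

namespace Matrix

variable {R : Type*} [CommRing R] {d : ℕ}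

lemma det_vandermonde_eq_neg_one_pow_mul (v : Fin d → R) :
    (vandermonde v).det =
      (-1) ^ (d * (d - 1) / 2) *
        ∏ p ∈ univ.filter (fun p : Fin d × Fin d => p.1 < p.2), (v p.1 - v p.2) := by
  rw [det_vandermonde, ← Fin.card_filter_fst_lt_snd, ← prod_neg,
    Fin.prod_filter_fst_lt_snd d fun i j => -(v i - v j)]
  simp only [neg_sub]

lemma det_descPochhammer_eval [IsDomain R] (v : Fin d → R) :
    (of fun i j : Fin d => (descPochhammer R j).eval (v i)).det = (vandermonde v).det :=
  (det_eval_matrixOfPolynomials_eq_det_vandermonde v (fun j => descPochhammer R j)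
    (fun j => descPochhammer_natDegree R j) (fun j => monic_descPochhammer R j)).symm

end Matrix

/-- For nonnegative integers `k_0, …, k_{d-1}` one has
`det[1/(k_i + d - 1 - j)!]_{0 ≤ i,j ≤ d-1}
  = (-1)^{d(d-1)/2} · ∏_{i<j}(k_i - k_j) / ∏_i (k_i + d - 1)!`,
with the convention `1/m! = 0` for `m < 0`. -/
theorem det_inv_factorial_shifted (d : ℕ) (k : Fin d → ℕ) :
    Matrix.det (Matrix.of fun i j : Fin d =>
        invFact ((k i : ℤ) + (d : ℤ) - 1 - (j : ℕ))) =
      (-1) ^ (d * (d - 1) / 2) *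
        (∏ p ∈ Finset.univ.filter (fun p : Fin d × Fin d => p.1 < p.2),
          ((k p.1 : ℚ) - (k p.2 : ℚ))) /
        ∏ i : Fin d, ((Nat.factorial (k i + d - 1) : ℕ) : ℚ) := by
  set x : Fin d → ℕ := fun i => k i + (d - 1) with hx
  have hxk (i : Fin d) : k i + d - 1 = x i := by have := i.pos; simp only [hx]; omega
  have hentry : (Matrix.of fun i j : Fin d => invFact ((k i : ℤ) + (d : ℤ) - 1 - (j : ℕ))) =
      Matrix.of fun i j : Fin d =>
        ((x i)! : ℚ)⁻¹ * (descPochhammer ℚ j).eval (x i : ℚ) := by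
    ext i j
    have hshift : (k i : ℤ) + d - 1 - (j : ℕ) = (x i : ℤ) - (j : ℕ) := by
      have := i.pos; simp only [hx]; omega
    rw [Matrix.of_apply, Matrix.of_apply, hshift, invFact_natCast_sub,
      descPochhammer_eval_eq_descFactorial, div_eq_inv_mul]
  have hdiff (i j : Fin d) : (x i : ℚ) - x j = (k i : ℚ) - k j := by
    simp only [hx]; push_cast; ring
  calc _ = (Matrix.of fun i j : Fin d =>
          ((x i)! : ℚ)⁻¹ * (descPochhammer ℚ j).eval (x i : ℚ)).det := by rw [hentry]
    _ = (∏ i, ((x i)! : ℚ)⁻¹) *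
          (Matrix.of fun i j : Fin d => (descPochhammer ℚ j).eval (x i : ℚ)).det :=
        Matrix.det_mul_column _ _
    _ = (∏ i, ((x i)! : ℚ)⁻¹) * ((-1) ^ (d * (d - 1) / 2) *
          ∏ p ∈ univ.filter (fun p : Fin d × Fin d => p.1 < p.2),
            ((x p.1 : ℚ) - x p.2)) := by
        rw [Matrix.det_descPochhammer_eval, Matrix.det_vandermonde_eq_neg_one_pow_mul]
    _ = _ := by
        simp only [hdiff, hxk, prod_inv_distrib]
        ring
end

section
/- Let A be a commutative ℚ-algebra, c(T) = T^r - c_1 T^{r-1} + ... + (-1)^r c_r a monic polynomial over A, and let B = A[ξ]/(c(ξ)), a free A-module with basis 1, ξ, ..., ξ^{r-1}. Define coeff_ξ: B → A as the coefficient of ξ^{r-1}. Then for every nonnegative integer p, coeff_ξ(ξ^p) = s_{p - r + 1}, the (p - r + 1)-st coefficient of the power series s(t) determined by s(t)·c̃(-t) = 1, where c̃(t) = 1 + c_1 t + ... + c_r t^r; here s_j := 0 for j < 0. -/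
/-- Let `A` be a commutative `ℚ`-algebra, `P(T) = T^r - c_1 T^{r-1} + ⋯ + (-1)^r c_r`
(i.e. `P = ∑_{i=0}^r (-1)^i c_i T^{r-i}` with `c_0 = 1`), and let `B = A[ξ] = A[T]/(P)`,
free over `A` with basis `1, ξ, …, ξ^{r-1}`; the coefficient of `ξ^{r-1}` in the basis
expansion of `ξ^p` is the degree-`(r-1)` coefficient of `X^p mod P`.  If
`s(t) = ∑_j s_j t^j` satisfies `s(t)·c̃(-t) = 1` where `c̃(t) = ∑_{i=0}^r c_i t^i`, then
`coeff_ξ(ξ^p) = s_{p-r+1}` (with `s_j = 0` for `j < 0`) for every `p ≥ 0`. -/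
theorem coeff_xi_pow_eq_segre (A : Type*) [CommRing A] [Algebra ℚ A] (r : ℕ) (hr : 1 ≤ r)
    (c s : ℕ → A) (hc0 : c 0 = 1)
    (hs : PowerSeries.mk s *
        (∑ i ∈ Finset.range (r + 1), PowerSeries.monomial (R := A) i ((-1 : A) ^ i * c i)) = 1)
    (p : ℕ) :
    ((Polynomial.X ^ p) %ₘ
        (∑ i ∈ Finset.range (r + 1),
          Polynomial.C ((-1 : A) ^ i * c i) * Polynomial.X ^ (r - i))).coeff (r - 1) =
      if p + 1 < r then 0 else s (p + 1 - r) := by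
  classical
  rcases subsingleton_or_nontrivial A with hA | hA
  · exact Subsingleton.elim _ _
  set h : ℕ → A := fun m => if m ≤ r then (-1 : A) ^ m * c m else 0 with hh
  set Q : Polynomial A := ∑ i ∈ Finset.range (r + 1),
      Polynomial.C ((-1 : A) ^ i * c i) * Polynomial.X ^ (r - i) with hQ
  have hQsplit : Q = Polynomial.X ^ r + ∑ i ∈ Finset.range r,
      Polynomial.C ((-1 : A) ^ (i + 1) * c (i + 1)) * Polynomial.X ^ (r - (i + 1)) := by
    rw [hQ, Finset.sum_range_succ']
    simp only [pow_zero, one_mul, hc0, Nat.sub_zero, Polynomial.C_1]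
    ring
  have hE : (∑ i ∈ Finset.range r,
      Polynomial.C ((-1 : A) ^ (i + 1) * c (i + 1)) * Polynomial.X ^ (r - (i + 1))).degree
      < (r : WithBot ℕ) := by
    apply lt_of_le_of_lt (Polynomial.degree_sum_le _ _)
    rw [Finset.sup_lt_iff (by exact_mod_cast WithBot.bot_lt_coe r)]
    intro i hi
    apply lt_of_le_of_lt (Polynomial.degree_C_mul_X_pow_le _ _)
    exact_mod_cast Nat.sub_lt (by omega) (by omega)
  have hQm : Q.Monic := by
    rw [hQsplit]; exact Polynomial.monic_X_pow_add hE
  have hQdeg : Q.degree = r := by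
    rw [hQsplit, Polynomial.degree_add_eq_left_of_degree_lt, Polynomial.degree_X_pow]
    rw [Polynomial.degree_X_pow]; exact hE
  have hFcoeff : ∀ m, (PowerSeries.coeff (R := A) m)
      (∑ i ∈ Finset.range (r + 1), PowerSeries.monomial (R := A) i ((-1 : A) ^ i * c i)) = h m := by
    intro m
    rw [map_sum]
    simp only [PowerSeries.coeff_monomial]
    rw [Finset.sum_ite_eq (Finset.range (r + 1)) m (fun i => (-1 : A) ^ i * c i)]
    simp [hh, Nat.lt_succ_iff]
  have hrec : ∀ j, ∑ k ∈ Finset.range (j + 1), s k * h (j - k) = if j = 0 then 1 else 0 := by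
    intro j
    have hcj := congrArg (PowerSeries.coeff (R := A) j) hs
    rw [PowerSeries.coeff_mul, Finset.Nat.sum_antidiagonal_eq_sum_range_succ_mk] at hcj
    simp only [PowerSeries.coeff_mk, hFcoeff, PowerSeries.coeff_one] at hcj
    exact hcj
  have h0 : h 0 = 1 := by rw [hh]; simp [hc0]
  have s0 : s 0 = 1 := by
    have := hrec 0
    simpa [h0] using this
  induction p using Nat.strong_induction_on with
  | _ p IH =>
    by_cases hp : p < r
    · rw [(Polynomial.modByMonic_eq_self_iff hQm).2
        (by rw [hQdeg, Polynomial.degree_X_pow]; exact_mod_cast hp)]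
      rw [Polynomial.coeff_X_pow]
      by_cases hpr : p + 1 < r
      · rw [if_neg (by omega), if_pos hpr]
      · rw [if_pos (by omega), if_neg hpr]
        have : p + 1 - r = 0 := by omega
        rw [this, s0]
    · have hpr : r ≤ p := not_lt.1 hp
      have key : Polynomial.X ^ (p - r) * Q = Polynomial.X ^ p +
          ∑ i ∈ Finset.Ico 1 (r + 1),
            Polynomial.C ((-1 : A) ^ i * c i) * Polynomial.X ^ (p - i) := by
        rw [hQ, Finset.mul_sum]
        have hterm : ∀ i ∈ Finset.range (r + 1),
            Polynomial.X ^ (p - r) * (Polynomial.C ((-1 : A) ^ i * c i)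
              * Polynomial.X ^ (r - i))
            = Polynomial.C ((-1 : A) ^ i * c i) * Polynomial.X ^ (p - i) := by
          intro i hi
          rw [Finset.mem_range] at hi
          rw [mul_left_comm, ← pow_add]
          have : p - r + (r - i) = p - i := by omega
          rw [this]
        rw [Finset.sum_congr rfl hterm, Finset.range_eq_Ico,
          Finset.sum_eq_sum_Ico_succ_bot (by omega : (0 : ℕ) < r + 1)]
        simp [hc0]
      have hmod : Polynomial.X ^ p %ₘ Q =
          (-∑ i ∈ Finset.Ico 1 (r + 1),
            Polynomial.C ((-1 : A) ^ i * c i) * Polynomial.X ^ (p - i)) %ₘ Q := by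
        apply Polynomial.modByMonic_eq_of_dvd_sub hQm
        refine ⟨Polynomial.X ^ (p - r), ?_⟩
        rw [sub_neg_eq_add, ← key]; ring
      have hsum : (∑ i ∈ Finset.Ico 1 (r + 1),
            Polynomial.C ((-1 : A) ^ i * c i) * Polynomial.X ^ (p - i)) %ₘ Q
          = ∑ i ∈ Finset.Ico 1 (r + 1),
            Polynomial.C ((-1 : A) ^ i * c i) * (Polynomial.X ^ (p - i) %ₘ Q) := by
        have hmh : ∀ f : Polynomial A, f %ₘ Q = Polynomial.modByMonicHom Q f := fun _ => rfl
        rw [hmh, map_sum]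
        refine Finset.sum_congr rfl fun i _ => ?_
        rw [← Polynomial.smul_eq_C_mul, map_smul, ← hmh, Polynomial.smul_eq_C_mul]
      rw [hmod, Polynomial.neg_modByMonic, hsum, Polynomial.coeff_neg,
        Polynomial.finset_sum_coeff]
      simp only [Polynomial.coeff_C_mul]
      have hIH : ∀ i ∈ Finset.Ico 1 (r + 1),
          ((-1 : A) ^ i * c i) * ((Polynomial.X ^ (p - i) %ₘ Q).coeff (r - 1))
          = h i * (if p + 1 - r < i then 0 else s (p + 1 - r - i)) := by
        intro i hi
        rw [Finset.mem_Ico] at hi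
        rw [IH (p - i) (by omega)]
        have hhi : h i = (-1 : A) ^ i * c i := by rw [hh]; exact if_pos (by omega)
        rw [hhi]
        by_cases hcase : p - i + 1 < r
        · rw [if_pos hcase, if_pos (by omega)]
        · rw [if_neg hcase, if_neg (by omega)]
          have : p - i + 1 - r = p + 1 - r - i := by omega
          rw [this]
      rw [Finset.sum_congr rfl hIH, if_neg (by omega : ¬ p + 1 < r)]
      set j := p + 1 - r with hj
      have hj1 : 1 ≤ j := by omega
      have h1 := hrec j
      rw [if_neg (by omega), Finset.sum_range_succ, Nat.sub_self, h0, mul_one] at h1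
      have hrefl : ∑ k ∈ Finset.range j, s k * h (j - k)
          = ∑ m ∈ Finset.range j, s (j - 1 - m) * h (m + 1) := by
        rw [← Finset.sum_range_reflect]
        refine Finset.sum_congr rfl fun m hm => ?_
        rw [Finset.mem_range] at hm
        have : j - (j - 1 - m) = m + 1 := by omega
        rw [this]
      rw [hrefl] at h1
      -- h1 : ∑ m ∈ range j, s (j-1-m) * h (m+1) + s j = 0
      set t : ℕ → A := fun m => if m < j then s (j - 1 - m) * h (m + 1) else 0 with ht
      have hA1 : ∑ i ∈ Finset.Ico 1 (r + 1),
          h i * (if j < i then 0 else s (j - i)) = ∑ m ∈ Finset.range r, t m := by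
        rw [Finset.sum_Ico_eq_sum_range]
        simp only [Nat.add_sub_cancel]
        refine Finset.sum_congr rfl fun m hm => ?_
        rw [Finset.mem_range] at hm
        rw [ht]
        simp only []
        rw [add_comm 1 m]
        by_cases hmj : m < j
        · rw [if_pos hmj, if_neg (by omega)]
          have : j - (m + 1) = j - 1 - m := by omega
          rw [this, mul_comm]
        · rw [if_neg hmj, if_pos (by omega), mul_zero]
      have hB : ∑ m ∈ Finset.range j, s (j - 1 - m) * h (m + 1)
          = ∑ m ∈ Finset.range j, t m := by
        refine Finset.sum_congr rfl fun m hm => ?_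
        rw [Finset.mem_range] at hm
        rw [ht]; simp only []
        rw [if_pos hm]
      have hhz : ∀ x : ℕ, r ≤ x → h (x + 1) = 0 := by
        intro x hx; rw [hh]; exact if_neg (by omega)
      have hC : ∑ m ∈ Finset.range r, t m = ∑ m ∈ Finset.range j, t m := by
        rcases le_total r j with hle | hle
        · rw [Finset.sum_subset (Finset.range_subset_range.2 hle)]
          intro x _ hx
          rw [Finset.mem_range, not_lt] at hx
          rw [ht]; simp only []
          by_cases hxj : x < j
          · rw [if_pos hxj, hhz x hx, mul_zero]
          · rw [if_neg hxj]
        · rw [(Finset.sum_subset (Finset.range_subset_range.2 hle) ?_ :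
            ∑ m ∈ Finset.range j, t m = ∑ m ∈ Finset.range r, t m)]
          intro x _ hx
          rw [Finset.mem_range, not_lt] at hx
          rw [ht]; exact if_neg (by omega)
      rw [hA1, hC, ← hB]
      linear_combination -h1
end

section
/- For nonnegative integers p_0,...,p_{d-1} and Chern roots α_1,...,α_r (so s_k = h_k(α)), the coefficient of ξ_0^{r-1}···ξ_{d-1}^{r-d} in ξ_0^{p_0}···ξ_{d-1}^{p_{d-1}} (with respect to the free basis of R_2 over R_3 as above) equals the Schur-type determinant det[s_{p_i + j - r + 1}]_{0 ≤ i,j ≤ d-1}, with s_m = 0 for m < 0. -/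
open MvPolynomial

noncomputable section

/-- Evaluation of a polynomial in `r` "Chern-class variables" (standing for `c_1, …, c_r`)
at `c_i = e_i(ξ_0, …, ξ_{r-1})`, landing in `R₁ = A[ξ_0, …, ξ_{r-1}]`.  An element of
`R₃ = A[c_1, …, c_r]` is represented as such an evaluation. -/
def evalChern (A : Type*) [CommRing A] (r : ℕ) (q : MvPolynomial (Fin r) A) :
    MvPolynomial (Fin r) A :=
  aeval (fun i : Fin r => esymm (Fin r) A ((i : ℕ) + 1)) q

/-- The index set of the basis monomials `ξ_0^{i_0}⋯ξ_{d-1}^{i_{d-1}}`, `0 ≤ i_l ≤ r-l-1`,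
of `R₂` over `R₃`. -/
def basisIdx (r d : ℕ) : Finset (Fin d → ℕ) :=
  Fintype.piFinset (fun l : Fin d => Finset.range (r - (l : ℕ)))

/-- The top basis index `(r-1, r-2, …, r-d)`. -/
def topIdx (r d : ℕ) : Fin d → ℕ := fun l => r - 1 - (l : ℕ)

/-- The basis monomial `ξ_0^{v_0}⋯ξ_{d-1}^{v_{d-1}}` in `R₁` (with `d ≤ r`). -/
def xiMono (A : Type*) [CommRing A] {r d : ℕ} (hdr : d ≤ r) (v : Fin d → ℕ) :
    MvPolynomial (Fin r) A :=
  ∏ l : Fin d, (X (Fin.castLE hdr l) : MvPolynomial (Fin r) A) ^ v l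

/-- The full Vandermonde product `Δ(ξ_0, …, ξ_{r-1})`. -/
def vandXi (A : Type*) [CommRing A] (r : ℕ) : MvPolynomial (Fin r) A :=
  ∏ p ∈ Finset.univ.filter (fun p : Fin r × Fin r => p.1 < p.2),
    ((X p.1 : MvPolynomial (Fin r) A) - X p.2)

/-- `s_m = h_m(ξ_0,…,ξ_{r-1})` for an integer index, with `s_m = 0` for `m < 0`:  the
Segre coefficients, i.e. the complete homogeneous symmetric polynomials in the roots. -/
def segreInt (A : Type*) [CommRing A] (r : ℕ) (m : ℤ) : MvPolynomial (Fin r) A :=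
  if 0 ≤ m then hsymm (Fin r) A m.toNat else 0
/-!
Multiplying the decomposition by `∏_{j ≥ d} ξ_j^{r-1-j}` turns every `ξ^v` into a monomial
`ξ^μ(v)` in all `r` roots, and antisymmetrizing (which commutes with the symmetric coefficients)
turns it into the alternant `a_μ(v) = det(ξ_j^{μ(v)_i})`. For a basis index `v` other than the
top one, `μ(v)` has a repeated entry by pigeonhole, so `a_μ(v) = 0`; hence
`coeff · a_δ = a_μ(p)` with `δ = (r-1, …, 0)`.

The bialternant formula `a_μ = det(s_{μ_i - (r-1) + k}) · a_δ` comes from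
`ξ_j^m = ∑_k (-1)^k e_k(ξ without ξ_j) s_{m-k}`, i.e. from
`∏_{i ≠ j} (1 - ξ_i t) · ∑_m s_m t^m = 1 / (1 - ξ_j t)`. For `μ = μ(p)` the last `r - d` rows of
that matrix are `(0, …, 0, 1, *, …, *)`, so its determinant is the `d × d` one of the statement;
and `a_δ` can be cancelled, being a Vandermonde determinant and hence a non-zero-divisor.
-/

open Finset

namespace PowerSeries

theorem rescale_mk_one_mul_one_sub {R : Type*} [CommRing R] (a : R) :
    rescale a (mk 1) * (1 - C a * X) = 1 := by
  rw [← rescale_X, ← map_one (rescale a), ← map_sub, ← map_mul, mk_one_mul_one_sub_eq_one,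
    map_one]

end PowerSeries

namespace MvPolynomial

section CommSemiring

variable {σ R : Type*} [CommSemiring R] [Fintype σ] [DecidableEq σ]

theorem prod_map_X_toMultiset (l : σ →₀ ℕ) :
    ((Finsupp.toMultiset l).map (X (R := R))).prod = ∏ i, X i ^ l i := by
  rw [Finset.prod_multiset_map_count, Finsupp.toFinset_toMultiset]
  simp only [Finsupp.count_toMultiset]
  exact Finset.prod_subset (subset_univ _) fun i _ hi => by simp [Finsupp.notMem_support_iff.1 hi]

theorem hsymm_eq_sum_finsuppAntidiag (m : ℕ) :
    hsymm σ R m = ∑ l ∈ univ.finsuppAntidiag m, ∏ i, X i ^ l i := by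
  refine Finset.sum_bij' (fun s _ => Multiset.toFinsupp s.1)
    (fun l hl => ⟨Finsupp.toMultiset l, ?_⟩) ?_ ?_ ?_ ?_ ?_
  · rw [Finsupp.card_toMultiset, Finsupp.sum_fintype _ _ (fun _ => rfl)]
    exact (mem_finsuppAntidiag.1 hl).1
  · intro s _
    refine mem_finsuppAntidiag.2 ⟨?_, subset_univ _⟩
    calc univ.sum (Multiset.toFinsupp s.1) = (Multiset.toFinsupp s.1).sum fun _ => id :=
          (Finsupp.sum_fintype _ (fun _ => id) fun _ => rfl).symm
      _ = m := by rw [Multiset.toFinsupp_sum_eq, s.2]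
  · exact fun _ _ => mem_univ _
  · intro s _
    exact Sym.coe_injective (Multiset.toFinsupp_toMultiset s.1)
  · intro l _
    exact Finsupp.toMultiset_toFinsupp l
  · intro s _
    conv_lhs => rw [← Multiset.toFinsupp_toMultiset s.1]
    exact prod_map_X_toMultiset _

open PowerSeries in
theorem mk_hsymm_eq_prod_rescale :
    mk (hsymm σ R) = ∏ i, rescale (X i : MvPolynomial σ R) (mk 1) := by
  ext m
  simp [coeff_prod, hsymm_eq_sum_finsuppAntidiag, coeff_rescale]

end CommSemiring

variable {σ R : Type*} [CommRing R]

theorem isRegular_X_sub_X_of_lt [LinearOrder σ] [WellFoundedGT σ] {i j : σ} (hij : i < j) :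
    IsRegular (X j - X i : MvPolynomial σ R) := by
  rcases subsingleton_or_nontrivial R with hR | hR
  · exact ⟨fun _ _ _ => Subsingleton.elim _ _, fun _ _ _ => Subsingleton.elim _ _⟩
  have hmonic : MonomialOrder.lex.Monic (X i - X j : MvPolynomial σ R) := by
    rw [sub_eq_add_neg]
    refine MonomialOrder.monic_X.add_of_lt ?_
    rw [MonomialOrder.degree_neg, MonomialOrder.degree_X, MonomialOrder.degree_X,
      MonomialOrder.lex_lt_iff]
    exact Finsupp.Lex.single_lt_iff.2 hij
  have hreg : IsRegular (X i - X j : MvPolynomial σ R) :=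
    isRegular_iff_mem_nonZeroDivisors.2 <|
      MonomialOrder.lex.mem_nonZeroDivisors_of_leadingCoeff_mem_nonZeroDivisors
        (hmonic.leadingCoeff_eq_one ▸ one_mem _)
  simpa using (isUnit_one.neg.isRegular).mul hreg

variable [Fintype σ] [DecidableEq σ]

variable (R) in
/-- Its coefficients are the signed elementary symmetric polynomials in the variables other
than `X j`. -/
def esymmPolyErase (j : σ) : Polynomial (MvPolynomial σ R) :=
  ∏ i ∈ univ.erase j, (1 - Polynomial.C (X i) * Polynomial.X)

theorem natDegree_esymmPolyErase_lt (j : σ) :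
    (esymmPolyErase R j).natDegree < Fintype.card σ := by
  have hfactor (i : σ) :
      (1 - Polynomial.C (X i : MvPolynomial σ R) * Polynomial.X).natDegree ≤ 1 :=
    (Polynomial.natDegree_sub_le _ _).trans <| max_le (by simp)
      ((Polynomial.natDegree_C_mul_le _ _).trans Polynomial.natDegree_X_le)
  calc (esymmPolyErase R j).natDegree ≤ ∑ i ∈ univ.erase j, 1 :=
        (Polynomial.natDegree_prod_le _ _).trans (sum_le_sum fun i _ => hfactor i)
    _ = Fintype.card σ - 1 := by simp [card_erase_of_mem]
    _ < Fintype.card σ := Nat.sub_lt (Fintype.card_pos_iff.2 ⟨j⟩) Nat.one_pos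

open PowerSeries in
theorem esymmPolyErase_mul_mk_hsymm (j : σ) :
    (esymmPolyErase R j : PowerSeries (MvPolynomial σ R)) * mk (hsymm σ R) =
      rescale (X j) (mk 1) := by
  have hcoe : (esymmPolyErase R j : PowerSeries (MvPolynomial σ R)) =
      ∏ i ∈ univ.erase j, (1 - PowerSeries.C (X i) * PowerSeries.X) := by
    rw [esymmPolyErase, ← Polynomial.coeToPowerSeries.ringHom_apply, map_prod]
    simp
  rw [hcoe, mk_hsymm_eq_prod_rescale, ← mul_prod_erase univ _ (mem_univ j), mul_left_comm,
    ← prod_mul_distrib, prod_eq_one fun i _ => by rw [mul_comm, rescale_mk_one_mul_one_sub],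
    mul_one]

theorem X_pow_eq_sum_antidiagonal_coeff_mul_hsymm (j : σ) (m : ℕ) :
    X j ^ m = ∑ p ∈ antidiagonal m, (esymmPolyErase R j).coeff p.1 * hsymm σ R p.2 := by
  have := congrArg (PowerSeries.coeff m) (esymmPolyErase_mul_mk_hsymm (R := R) j)
  simpa [PowerSeries.coeff_mul, PowerSeries.coeff_rescale, eq_comm] using this

variable (R) in
def antisymmetrize : MvPolynomial σ R →ₗ[R] MvPolynomial σ R :=
  ∑ τ : Equiv.Perm σ, (Equiv.Perm.sign τ : ℤ) • (rename τ).toLinearMap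

theorem antisymmetrize_apply (f : MvPolynomial σ R) :
    antisymmetrize R f = ∑ τ : Equiv.Perm σ, (Equiv.Perm.sign τ : ℤ) • rename τ f := by
  simp [antisymmetrize]

theorem antisymmetrize_mul_of_isSymmetric {q : MvPolynomial σ R} (hq : q.IsSymmetric)
    (f : MvPolynomial σ R) : antisymmetrize R (q * f) = q * antisymmetrize R f := by
  simp only [antisymmetrize_apply, map_mul, hq _, mul_sum, mul_smul_comm]

variable (R) in
def alternant (w : σ → ℕ) : MvPolynomial σ R :=
  (Matrix.of fun i j : σ => (X j : MvPolynomial σ R) ^ w i).det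

theorem antisymmetrize_prod_X_pow (w : σ → ℕ) :
    antisymmetrize R (∏ j, X j ^ w j) = alternant R w := by
  rw [antisymmetrize_apply, alternant, Matrix.det_apply, ← Equiv.sum_comp (Equiv.inv _)]
  refine sum_congr rfl fun τ _ => ?_
  rw [Equiv.inv_apply, Equiv.Perm.sign_inv, map_prod, ← Equiv.prod_comp τ]
  simp [Units.smul_def, zsmul_eq_mul]

theorem alternant_eq_zero_of_not_injective {w : σ → ℕ} (hw : ¬ Function.Injective w) :
    alternant R w = 0 := by
  obtain ⟨i, j, hij, hne⟩ := Function.not_injective_iff.1 hw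
  exact Matrix.det_zero_of_row_eq hne (congrArg (fun n k => (X k : MvPolynomial σ R) ^ n) hij)

end MvPolynomial

namespace Matrix

variable {R : Type*} [CommRing R]

theorem det_eq_one_of_isUpperTriangular {n : Type*} [Fintype n] [DecidableEq n] [LinearOrder n]
    {M : Matrix n n R} (hM : M.IsUpperTriangular) (hdiag : ∀ i, M i i = 1) : M.det = 1 := by
  rw [det_of_isUpperTriangular hM, prod_eq_one fun i _ => hdiag i]

theorem det_eq_det_submatrix_castAdd {d e : ℕ} (M : Matrix (Fin (d + e)) (Fin (d + e)) R)
    (hzero : ∀ i k : Fin (d + e), d ≤ (i : ℕ) → k < i → M i k = 0)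
    (hone : ∀ i : Fin (d + e), d ≤ (i : ℕ) → M i i = 1) :
    M.det = (M.submatrix (Fin.castAdd e) (Fin.castAdd e)).det := by
  rw [← det_submatrix_equiv_self finSumFinEquiv M, ← fromBlocks_toBlocks (M.submatrix _ _)]
  have hlower : (M.submatrix finSumFinEquiv finSumFinEquiv).toBlocks₂₁ = 0 := by
    ext i k
    refine hzero _ _ (by simp) (Fin.lt_def.2 ?_)
    simp only [finSumFinEquiv_apply_left, finSumFinEquiv_apply_right, Fin.val_castAdd,
      Fin.val_natAdd]
    omega
  rw [hlower, det_fromBlocks_zero₂₁, det_eq_one_of_isUpperTriangular (M := toBlocks₂₂ _), mul_one]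
  · rfl
  · intro i k hki
    exact hzero _ _ (by simp) (by rw [Fin.lt_def] at hki ⊢; simpa using hki)
  · intro i
    exact hone _ (by simp)

end Matrix

theorem Fin.eq_rev_of_injective_of_le {n : ℕ} {w : Fin n → ℕ} (hw : Function.Injective w)
    (hle : ∀ j, w j ≤ n - 1 - j) (j : Fin n) : w j = n - 1 - j := by
  have himage : univ.image w = range n := by
    refine eq_of_subset_of_card_le (image_subset_iff.2 fun i _ => ?_) ?_
    · have := hle i
      have := i.2
      exact mem_range.2 (by omega)
    · rw [card_image_of_injective _ hw, card_range, card_univ, Fintype.card_fin]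
  have hsum : ∑ i, w i = ∑ i : Fin n, (n - 1 - i) :=
    calc ∑ i, w i = ∑ k ∈ range n, k := by rw [← himage, sum_image hw.injOn]
      _ = ∑ i : Fin n, (n - 1 - i) := by
        rw [Fin.sum_univ_eq_sum_range (fun k => n - 1 - k), sum_range_reflect (fun k => k)]
  exact (sum_eq_sum_iff_of_le fun i _ => hle i).1 hsum j (mem_univ j)

section JacobiTrudi

variable {A : Type*} [CommRing A] {r : ℕ}

theorem segreInt_natCast (m : ℕ) : segreInt A r m = hsymm (Fin r) A m := by
  simp [segreInt]

theorem segreInt_of_neg {m : ℤ} (hm : m < 0) : segreInt A r m = 0 := by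
  simp [segreInt, not_le.2 hm]

theorem segreInt_zero : segreInt A r 0 = 1 := by
  simp [segreInt]

theorem X_pow_eq_sum_coeff_mul_segreInt (j : Fin r) (m : ℕ) :
    X j ^ m = ∑ k : Fin r, (esymmPolyErase A j).coeff k * segreInt A r (m - k) := by
  set g : ℕ → MvPolynomial (Fin r) A :=
    fun k => (esymmPolyErase A j).coeff k * segreInt A r (m - k)
  have hdeg := natDegree_esymmPolyErase_lt (R := A) j
  rw [Fintype.card_fin] at hdeg
  rw [X_pow_eq_sum_antidiagonal_coeff_mul_hsymm, Nat.sum_antidiagonal_eq_sum_range_succ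
    (fun k l => (esymmPolyErase A j).coeff k * hsymm (Fin r) A l), Fin.sum_univ_eq_sum_range g]
  calc ∑ k ∈ range (m + 1), (esymmPolyErase A j).coeff k * hsymm (Fin r) A (m - k)
      = ∑ k ∈ range (m + 1), g k := sum_congr rfl fun k hk => by
        rw [← segreInt_natCast, Nat.cast_sub (Nat.lt_succ_iff.1 (mem_range.1 hk))]
    _ = ∑ k ∈ range (m + 1 + r), g k := sum_subset (range_subset_range.2 (by omega))
        fun k _ hk => by
          rw [mem_range, not_lt] at hk
          simp [g, segreInt_of_neg (m := (m : ℤ) - k) (by omega)]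
    _ = ∑ k ∈ range r, g k := (sum_subset (range_subset_range.2 (by omega))
        fun k _ hk => by
          rw [mem_range, not_lt] at hk
          simp [g, Polynomial.coeff_eq_zero_of_natDegree_lt (hdeg.trans_le hk)]).symm

variable (A) in
def jacobiTrudiMatrix (w : Fin r → ℕ) : Matrix (Fin r) (Fin r) (MvPolynomial (Fin r) A) :=
  Matrix.of fun i k => segreInt A r (w i - (r - 1) + k)

variable (A r) in
def esymmEraseMatrix : Matrix (Fin r) (Fin r) (MvPolynomial (Fin r) A) :=
  Matrix.of fun k j => (esymmPolyErase A j).coeff (r - 1 - k)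

theorem alternant_eq_det_jacobiTrudiMatrix_mul (w : Fin r → ℕ) :
    alternant A w = (jacobiTrudiMatrix A w).det * (esymmEraseMatrix A r).det := by
  rw [alternant, ← Matrix.det_mul]
  refine congrArg Matrix.det (Matrix.ext fun i j => ?_)
  rw [Matrix.of_apply, X_pow_eq_sum_coeff_mul_segreInt, Matrix.mul_apply,
    ← Equiv.sum_comp (Fin.revPerm : Equiv.Perm (Fin r))]
  refine sum_congr rfl fun k _ => ?_
  have hk := k.2
  simp only [jacobiTrudiMatrix, esymmEraseMatrix, Matrix.of_apply, Fin.revPerm_apply, Fin.val_rev]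
  rw [mul_comm]
  congr 2
  · omega
  · omega

theorem jacobiTrudiMatrix_apply_of_staircase {w : Fin r → ℕ} {i : Fin r}
    (hw : w i = r - 1 - i) (k : Fin r) :
    jacobiTrudiMatrix A w i k = segreInt A r (k - i) := by
  have hi := i.2
  rw [jacobiTrudiMatrix, Matrix.of_apply, hw]
  congr 1
  omega

theorem det_jacobiTrudiMatrix_staircase :
    (jacobiTrudiMatrix A fun i : Fin r => r - 1 - i).det = 1 :=
  Matrix.det_eq_one_of_isUpperTriangular
    (fun i k hki => by
      rw [jacobiTrudiMatrix_apply_of_staircase rfl, segreInt_of_neg (by simpa using hki)])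
    (fun i => by rw [jacobiTrudiMatrix_apply_of_staircase rfl, sub_self,
      segreInt_zero])

theorem alternant_eq_det_mul_alternant_staircase (w : Fin r → ℕ) :
    alternant A w = (jacobiTrudiMatrix A w).det * alternant A fun i : Fin r => r - 1 - i := by
  rw [alternant_eq_det_jacobiTrudiMatrix_mul, alternant_eq_det_jacobiTrudiMatrix_mul (fun i => _),
    det_jacobiTrudiMatrix_staircase, one_mul]

theorem isRegular_alternant_staircase : IsRegular (alternant A fun i : Fin r => r - 1 - i) := by
  have hvdm : (Matrix.of fun i j : Fin r => (X j : MvPolynomial (Fin r) A) ^ (r - 1 - i)) =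
      ((Matrix.vandermonde X).submatrix id (Fin.revPerm : Equiv.Perm (Fin r))).transpose :=
    Matrix.ext fun i j => by simp [Fin.val_rev, Nat.sub_sub, add_comm]
  rw [alternant, hvdm, Matrix.det_transpose, Matrix.det_permute', Matrix.det_vandermonde]
  exact (((Equiv.Perm.sign _).isUnit.map (Int.castRingHom _)).isRegular).mul <|
    IsRegular.prod fun i _ => IsRegular.prod fun j hj => isRegular_X_sub_X_of_lt (mem_Ioi.1 hj)

end JacobiTrudi

section BasisMonomials

variable {A : Type*} [CommRing A] {r d : ℕ}

theorem isSymmetric_evalChern (q : MvPolynomial (Fin r) A) : (evalChern A r q).IsSymmetric := by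
  intro τ
  rw [evalChern, ← AlgHom.comp_apply, comp_aeval]
  exact DFunLike.congr_fun (congrArg _ (_root_.funext fun i => esymm_isSymmetric _ _ _ τ)) q

variable (r) in
def extendStaircase (v : Fin d → ℕ) : Fin r → ℕ :=
  fun j => if h : (j : ℕ) < d then v ⟨j, h⟩ else r - 1 - j

theorem xiMono_mul_prod_X_pow_extendStaircase_zero (hdr : d ≤ r) (v : Fin d → ℕ) :
    xiMono A hdr v * ∏ j, X j ^ extendStaircase r (0 : Fin d → ℕ) j =
      ∏ j, X j ^ extendStaircase r v j := by
  obtain ⟨e, rfl⟩ := Nat.exists_eq_add_of_le hdr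
  have hhead (w : Fin d → ℕ) (i : Fin d) : extendStaircase (d + e) w (Fin.castAdd e i) = w i :=
    dif_pos i.2
  have htail (w : Fin d → ℕ) (i : Fin e) :
      extendStaircase (d + e) w (Fin.natAdd d i) = d + e - 1 - (d + i) :=
    dif_neg (by simp)
  simp only [Fin.prod_univ_add, hhead, htail, Pi.zero_apply, pow_zero, prod_const_one, one_mul]
  rfl

theorem extendStaircase_topIdx :
    extendStaircase r (topIdx r d) = fun j : Fin r => r - 1 - (j : ℕ) := by
  funext j
  unfold extendStaircase
  split_ifs <;> rfl

theorem topIdx_mem_basisIdx (hdr : d ≤ r) : topIdx r d ∈ basisIdx r d :=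
  Fintype.mem_piFinset.2 fun l => mem_range.2 (by have := l.2; simp only [topIdx]; omega)

theorem not_injective_extendStaircase (hdr : d ≤ r) {v : Fin d → ℕ} (hv : v ∈ basisIdx r d)
    (hne : v ≠ topIdx r d) : ¬ Function.Injective (extendStaircase r v) := by
  intro hinj
  have hle (j : Fin r) : extendStaircase r v j ≤ r - 1 - j := by
    unfold extendStaircase
    split_ifs with h
    · have := mem_range.1 (Fintype.mem_piFinset.1 hv ⟨j, h⟩)
      simp only at this
      omega
    · exact le_rfl
  refine hne (funext fun l => ?_)
  have := Fin.eq_rev_of_injective_of_le hinj hle (Fin.castLE hdr l)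
  simpa [extendStaircase, topIdx] using this

theorem det_jacobiTrudiMatrix_extendStaircase (hdr : d ≤ r) (p : Fin d → ℕ) :
    (jacobiTrudiMatrix A (extendStaircase r p)).det =
      (Matrix.of fun i j : Fin d => segreInt A r ((p i : ℤ) + (j : ℕ) - (r : ℤ) + 1)).det := by
  obtain ⟨e, rfl⟩ := Nat.exists_eq_add_of_le hdr
  have htail {i : Fin (d + e)} (hi : d ≤ (i : ℕ)) :
      extendStaircase (d + e) p i = d + e - 1 - i := dif_neg (not_lt.2 hi)
  rw [Matrix.det_eq_det_submatrix_castAdd _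
    (fun i k hi hki => by
      rw [jacobiTrudiMatrix_apply_of_staircase (htail hi), segreInt_of_neg (by simpa using hki)])
    (fun i hi => by rw [jacobiTrudiMatrix_apply_of_staircase (htail hi), sub_self, segreInt_zero])]
  refine congrArg Matrix.det (Matrix.ext fun i k => ?_)
  simp only [Matrix.submatrix_apply, jacobiTrudiMatrix, extendStaircase, Matrix.of_apply,
    Fin.val_castAdd, dif_pos i.2]
  congr 1
  push_cast
  ring

end BasisMonomials

theorem coeff_monomial_eq_schur_det_general (A : Type*) [CommRing A]
    (r d : ℕ) (hdr : d ≤ r) (p : Fin d → ℕ)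
    (c : (Fin d → ℕ) → MvPolynomial (Fin r) A)
    (hdec : xiMono A hdr p = ∑ v ∈ basisIdx r d, evalChern A r (c v) * xiMono A hdr v) :
    evalChern A r (c (topIdx r d)) =
      Matrix.det (Matrix.of fun i j : Fin d =>
        segreInt A r ((p i : ℤ) + (j : ℕ) - (r : ℤ) + 1)) := by
  have hmonomial : ∏ j, X j ^ extendStaircase r p j =
      ∑ v ∈ basisIdx r d, evalChern A r (c v) * ∏ j, X j ^ extendStaircase r v j := by
    rw [← xiMono_mul_prod_X_pow_extendStaircase_zero hdr, hdec, sum_mul]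
    exact sum_congr rfl fun v _ => by rw [mul_assoc, xiMono_mul_prod_X_pow_extendStaircase_zero]
  have halternant : alternant A (extendStaircase r p) =
      evalChern A r (c (topIdx r d)) * alternant A fun j : Fin r => r - 1 - j := by
    rw [← antisymmetrize_prod_X_pow, hmonomial, map_sum,
      sum_eq_single_of_mem _ (topIdx_mem_basisIdx hdr)]
    · rw [antisymmetrize_mul_of_isSymmetric (isSymmetric_evalChern _), antisymmetrize_prod_X_pow,
        extendStaircase_topIdx]
    · intro v hv hne
      rw [antisymmetrize_mul_of_isSymmetric (isSymmetric_evalChern _), antisymmetrize_prod_X_pow,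
        alternant_eq_zero_of_not_injective (not_injective_extendStaircase hdr hv hne), mul_zero]
  refine (isRegular_alternant_staircase (A := A)).right ?_
  dsimp only
  rw [← halternant, alternant_eq_det_mul_alternant_staircase,
    det_jacobiTrudiMatrix_extendStaircase hdr]

/-- **Determinantal push-forward formula.**  For nonnegative integers `p_0,…,p_{d-1}`,
if `ξ_0^{p_0}⋯ξ_{d-1}^{p_{d-1}} = ∑_{0 ≤ i_l ≤ r-l-1} c_{(i)}·ξ^{(i)}` is the basis
decomposition with coefficients in `R₃ = A[c_1,…,c_r]`, then the coefficient of the top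
basis monomial `ξ_0^{r-1}⋯ξ_{d-1}^{r-d}` equals `det[s_{p_i + j - r + 1}]_{0 ≤ i,j ≤ d-1}`
(with `s_m = h_m(ξ)` and `s_m = 0` for `m < 0`). -/
theorem coeff_monomial_eq_schur_det (A : Type*) [CommRing A] [Algebra ℚ A]
    (r d : ℕ) (hdr : d ≤ r) (p : Fin d → ℕ)
    (c : (Fin d → ℕ) → MvPolynomial (Fin r) A)
    (hdec : xiMono A hdr p = ∑ v ∈ basisIdx r d, evalChern A r (c v) * xiMono A hdr v) :
    evalChern A r (c (topIdx r d)) =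
      Matrix.det (Matrix.of fun i j : Fin d =>
        segreInt A r ((p i : ℤ) + (j : ℕ) - (r : ℤ) + 1)) :=
  coeff_monomial_eq_schur_det_general A r d hdr p c hdec

end
end
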